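/- For all integers n ≥ 1 and k ≥ 1, the number of plane trees with n edges and exactly k leaves equals the number of 2-Motzkin paths of length n−1 in which the number of up steps plus the number of wavy level steps equals k−1. -/

import Mathlib

/-- A plane tree: a root together with a finite ordered list of plane subtrees. -/
inductive PlaneTree : Type
  | node : List PlaneTree → PlaneTree

namespace PlaneTree

/-- The number of vertices of a plane tree. -/
def numVertices : PlaneTree → ℕ
  | node ts => 1 + (ts.attach.map fun x => numVertices x.1).sum
decreasing_by
  have := List.sizeOf_lt_of_mem x.2
  simp only [PlaneTree.node.sizeOf_spec]
  omega

/-- The number of edges of a plane tree: one less than the number of vertices. -/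
def numEdges (t : PlaneTree) : ℕ := t.numVertices - 1

/-- The number of leaves (vertices with no children) of a plane tree. -/
def numLeaves : PlaneTree → ℕ
  | node [] => 1
  | node (t :: ts) => ((t :: ts).attach.map fun x => numLeaves x.1).sum
decreasing_by
  have := List.sizeOf_lt_of_mem x.2
  simp only [PlaneTree.node.sizeOf_spec]
  omega

end PlaneTree

/-- The steps of a 2-Motzkin path: up `(1,1)`, down `(1,-1)`, straight level `(1,0)`,
and wavy level `(1,0)`. -/
inductive MStep : Type
  | U : MStep
  | D : MStep
  | Ls : MStep
  | Lw : MStep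
deriving DecidableEq

/-- The height change of a step: `+1` for up, `-1` for down, `0` for level steps. -/
def MStep.val : MStep → ℤ
  | .U => 1
  | .D => -1
  | .Ls => 0
  | .Lw => 0

/-- A word over `{U, D, Ls, Lw}` is a 2-Motzkin path if all its prefix sums are
nonnegative and its total sum is `0`. -/
def IsTwoMotzkin (p : List MStep) : Prop :=
  (∀ q : List MStep, q <+: p → 0 ≤ (q.map MStep.val).sum) ∧ (p.map MStep.val).sum = 0

namespace PlaneTree

lemma numVertices_node (ts : List PlaneTree) :
    (node ts).numVertices = 1 + (ts.map numVertices).sum := by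
  rw [numVertices]; congr 1
  rw [List.attach_map_val (l := ts) (f := numVertices)]

lemma numVertices_pos (t : PlaneTree) : 1 ≤ t.numVertices := by
  cases t with
  | node ts => rw [numVertices_node]; omega

lemma numEdges_nil : (node []).numEdges = 0 := by
  simp [numEdges, numVertices_node]

lemma numEdges_cons (c : PlaneTree) (cs : List PlaneTree) :
    (node (c :: cs)).numEdges = 1 + c.numEdges + (node cs).numEdges := by
  have h1 := numVertices_pos c
  have h2 := numVertices_pos (node cs)
  simp only [numEdges, numVertices_node, List.map_cons, List.sum_cons] at *
  omega

lemma numLeaves_node (ts : List PlaneTree) (h : ts ≠ []) :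
    (node ts).numLeaves = (ts.map numLeaves).sum := by
  cases ts with
  | nil => simp at h
  | cons c cs =>
      rw [numLeaves]
      rw [List.attach_map_val (l := c :: cs) (f := numLeaves)]

lemma numLeaves_nil : (node []).numLeaves = 1 := by rw [numLeaves]

lemma numLeaves_single (c : PlaneTree) : (node [c]).numLeaves = c.numLeaves := by
  simp [numLeaves_node]

lemma numLeaves_cons_cons (c d : PlaneTree) (ds : List PlaneTree) :
    (node (c :: d :: ds)).numLeaves = c.numLeaves + (node (d :: ds)).numLeaves := by
  rw [numLeaves_node _ (by simp), numLeaves_node _ (by simp)]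
  simp

end PlaneTree

open MStep PlaneTree

/-- Sum of height changes. -/
def msum (p : List MStep) : ℤ := (p.map MStep.val).sum

lemma msum_nil : msum [] = 0 := rfl
lemma msum_cons (s p) : msum (s :: p) = s.val + msum p := by simp [msum]
lemma msum_append (p q) : msum (p ++ q) = msum p + msum q := by simp [msum]

lemma isTwoMotzkin_iff (p : List MStep) :
    IsTwoMotzkin p ↔ (∀ q, q <+: p → 0 ≤ msum q) ∧ msum p = 0 := Iff.rfl

lemma isTwoMotzkin_nil : IsTwoMotzkin [] := by
  constructor
  · intro q hq; simp [List.prefix_nil.mp hq, msum]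
  · rfl

lemma isTwoMotzkin_cons_level {s : MStep} (hs : s.val = 0) (p : List MStep) :
    IsTwoMotzkin (s :: p) ↔ IsTwoMotzkin p := by
  rw [isTwoMotzkin_iff, isTwoMotzkin_iff]
  constructor
  · rintro ⟨h1, h2⟩
    refine ⟨fun q hq => ?_, ?_⟩
    · have := h1 (s :: q) (by simpa using hq)
      rwa [msum_cons, hs, zero_add] at this
    · rwa [msum_cons, hs, zero_add] at h2
  · rintro ⟨h1, h2⟩
    refine ⟨fun q hq => ?_, ?_⟩
    · rcases q with _ | ⟨a, q⟩
      · simp [msum]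
      · rw [List.cons_prefix_cons] at hq
        rcases hq with ⟨rfl, hq⟩
        rw [msum_cons, hs, zero_add]
        exact h1 q hq
    · rw [msum_cons, hs, zero_add]; exact h2

lemma prefix_append_cases {α : Type} {q a b : List α} (h : q <+: a ++ b) :
    q <+: a ∨ ∃ r, q = a ++ r ∧ r <+: b := by
  induction a generalizing q with
  | nil => exact Or.inr ⟨q, rfl, by simpa using h⟩
  | cons x a ih =>
      rcases q with _ | ⟨y, q⟩
      · exact Or.inl List.nil_prefix
      · rw [List.cons_append, List.cons_prefix_cons] at h
        rcases h with ⟨rfl, h⟩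
        rcases ih h with h | ⟨r, rfl, hr⟩
        · exact Or.inl (by simpa [List.cons_prefix_cons] using h)
        · exact Or.inr ⟨r, rfl, hr⟩

lemma isTwoMotzkin_U_comp {a b : List MStep} (ha : IsTwoMotzkin a) (hb : IsTwoMotzkin b) :
    IsTwoMotzkin (U :: a ++ D :: b) := by
  rw [isTwoMotzkin_iff]
  constructor
  · intro q hq
    rcases q with _ | ⟨s, q⟩
    · simp [msum]
    · rw [show (U :: a ++ D :: b) = U :: (a ++ D :: b) by simp] at hq
      rw [List.cons_prefix_cons] at hq
      rcases hq with ⟨rfl, hq⟩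
      rw [msum_cons]
      rcases prefix_append_cases hq with h | ⟨r, rfl, hr⟩
      · have := ha.1 q h
        simp only [msum, MStep.val] at *
        omega
      · rcases r with _ | ⟨t, r⟩
        · have := ha.2
          simp only [msum, MStep.val, List.append_nil] at *
          omega
        · rw [List.cons_prefix_cons] at hr
          rcases hr with ⟨rfl, hr⟩
          have h1 := ha.2
          have h2 := hb.1 r hr
          rw [msum_append, msum_cons]
          rw [show msum a = 0 from h1]
          simp only [msum, MStep.val] at h2 ⊢
          omega
  · have h1 := ha.2; have h2 := hb.2
    rw [show (U :: a ++ D :: b) = U :: (a ++ D :: b) by simp, msum_cons, msum_append, msum_cons]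
    rw [show msum a = 0 from h1, show msum b = 0 from h2]
    simp [MStep.val]

/-- The recursive bijection from plane trees (with at least one edge) to 2-Motzkin paths. -/
def phi : PlaneTree → List MStep
  | .node [] => []
  | .node (.node [] :: []) => []
  | .node (.node (s :: ss) :: []) => Ls :: phi (.node (s :: ss))
  | .node (.node [] :: t :: ts) => Lw :: phi (.node (t :: ts))
  | .node (.node (s :: ss) :: t :: ts) =>
      U :: phi (.node (s :: ss)) ++ D :: phi (.node (t :: ts))
termination_by t => sizeOf t
decreasing_by all_goals simp <;> omega

example (s ss t ts) : phi (.node (.node (s :: ss) :: t :: ts)) =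
    U :: phi (.node (s :: ss)) ++ D :: phi (.node (t :: ts)) := by rw [phi]

lemma phi_spec : ∀ t : PlaneTree, t ≠ node [] →
    ((phi t).length + 1 = t.numEdges ∧ IsTwoMotzkin (phi t) ∧
      (phi t).count U + (phi t).count Lw + 1 = t.numLeaves) := by
  intro t
  induction t using phi.induct with
  | case1 => intro h; exact absurd rfl h
  | case2 =>
      intro _
      rw [phi]
      refine ⟨?_, isTwoMotzkin_nil, ?_⟩
      · simp [numEdges_cons, numEdges_nil]
      · simp [numLeaves_single, numLeaves_nil]
  | case3 s ss ih =>
      intro _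
      obtain ⟨h1, h2, h3⟩ := ih (by simp)
      rw [phi]
      refine ⟨?_, (isTwoMotzkin_cons_level (by rfl) _).mpr h2, ?_⟩
      · simp only [List.length_cons, numEdges_cons, numEdges_nil] at *
        omega
      · simp only [List.count_cons, numLeaves_single] at *
        simp at *
        omega
  | case4 t ts ih =>
      intro _
      obtain ⟨h1, h2, h3⟩ := ih (by simp)
      rw [phi]
      refine ⟨?_, (isTwoMotzkin_cons_level (by rfl) _).mpr h2, ?_⟩
      · simp only [List.length_cons, numEdges_cons, numEdges_nil] at *
        omega
      · rw [numLeaves_cons_cons, numLeaves_nil]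
        simp only [List.count_cons] at *
        simp at *
        omega
  | case5 s ss t ts ih1 ih2 =>
      intro _
      obtain ⟨h1, h2, h3⟩ := ih1 (by simp)
      obtain ⟨h1', h2', h3'⟩ := ih2 (by simp)
      rw [phi]
      refine ⟨?_, isTwoMotzkin_U_comp h2 h2', ?_⟩
      · rw [numEdges_cons]
        simp only [List.length_cons, List.length_append] at *
        omega
      · rw [numLeaves_cons_cons]
        simp only [List.count_cons, List.count_append, List.cons_append] at *
        simp at *
        omega

lemma split_gen : ∀ (N : ℕ) (p : List MStep) (m : ℤ), p.length ≤ N → 0 < m →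
    (∀ q, q <+: p → 0 ≤ m + msum q) → msum p = -m →
    ∃ a b, p = a ++ D :: b ∧ IsTwoMotzkin a ∧
      (∀ q, q <+: b → 0 ≤ (m - 1) + msum q) ∧ msum b = -(m - 1) := by
  intro N
  induction N with
  | zero =>
      intro p m hlen hm _ hsum
      rw [List.length_eq_zero_iff.mp (Nat.le_zero.mp hlen)] at hsum
      simp [msum] at hsum
      omega
  | succ N ih =>
      intro p m hlen hm hpre hsum
      rcases p with _ | ⟨s, p⟩
      · simp [msum] at hsum; omega
      · have hlen' : p.length ≤ N := by simpa using hlen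
        cases s with
        | D =>
            refine ⟨[], p, rfl, isTwoMotzkin_nil, fun q hq => ?_, ?_⟩
            · have := hpre (D :: q) (by simpa [List.cons_prefix_cons] using hq)
              rw [msum_cons] at this
              simp [MStep.val] at this ⊢
              omega
            · rw [msum_cons] at hsum
              simp [MStep.val] at hsum ⊢
              omega
        | Ls =>
            obtain ⟨a, b, rfl, ha, hb1, hb2⟩ := ih p m hlen' hm
              (fun q hq => by
                have := hpre (Ls :: q) (by simpa [List.cons_prefix_cons] using hq)
                rwa [msum_cons, show (Ls).val = 0 from rfl, zero_add] at this)
              (by rw [msum_cons, show (Ls).val = 0 from rfl, zero_add] at hsum; exact hsum)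
            exact ⟨Ls :: a, b, rfl, (isTwoMotzkin_cons_level (by rfl) _).mpr ha, hb1, hb2⟩
        | Lw =>
            obtain ⟨a, b, rfl, ha, hb1, hb2⟩ := ih p m hlen' hm
              (fun q hq => by
                have := hpre (Lw :: q) (by simpa [List.cons_prefix_cons] using hq)
                rwa [msum_cons, show (Lw).val = 0 from rfl, zero_add] at this)
              (by rw [msum_cons, show (Lw).val = 0 from rfl, zero_add] at hsum; exact hsum)
            exact ⟨Lw :: a, b, rfl, (isTwoMotzkin_cons_level (by rfl) _).mpr ha, hb1, hb2⟩
        | U =>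
            obtain ⟨a, b, rfl, ha, hb1, hb2⟩ := ih p (m + 1) hlen' (by omega)
              (fun q hq => by
                have := hpre (U :: q) (by simpa [List.cons_prefix_cons] using hq)
                rw [msum_cons, show (U).val = 1 from rfl] at this
                omega)
              (by rw [msum_cons, show (U).val = 1 from rfl] at hsum; omega)
            have hblen : b.length ≤ N := by
              simp only [List.length_append, List.length_cons] at hlen'
              omega
            obtain ⟨a2, b2, rfl, ha2, hb3, hb4⟩ := ih b m hblen hm
              (fun q hq => by have := hb1 q hq; omega)
              (by omega)
            refine ⟨U :: a ++ D :: a2, b2, by simp, isTwoMotzkin_U_comp ha ha2,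
              fun q hq => hb3 q hq, hb4⟩

lemma motzkin_U_split {r : List MStep} (h : IsTwoMotzkin (U :: r)) :
    ∃ a b, r = a ++ D :: b ∧ IsTwoMotzkin a ∧ IsTwoMotzkin b := by
  obtain ⟨a, b, rfl, ha, hb1, hb2⟩ := split_gen r.length r 1 le_rfl one_pos
    (fun q hq => by
      have := h.1 (U :: q) (by simpa [List.cons_prefix_cons] using hq)
      simp only [msum, MStep.val, List.map_cons, List.sum_cons] at this ⊢
      omega)
    (by
      have := h.2
      simp only [msum, MStep.val, List.map_cons, List.sum_cons] at this ⊢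
      omega)
  refine ⟨a, b, rfl, ha, ⟨fun q hq => ?_, ?_⟩⟩
  · have := hb1 q hq; simp only [msum] at this; omega
  · have := hb2; simp only [msum] at this; omega

lemma split_unique_aux {a a' b b' : List MStep} (ha : IsTwoMotzkin a) (ha' : IsTwoMotzkin a')
    (hpre : a <+: a') (h : a ++ D :: b = a' ++ D :: b') : a = a' := by
  obtain ⟨c, rfl⟩ := hpre
  rcases c with _ | ⟨s, c⟩
  · simp
  · exfalso
    rw [List.append_assoc] at h
    have h2 : (D : MStep) :: b = (s :: c) ++ D :: b' := by
      exact List.append_cancel_left h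
    have hs : D = s := by
      simpa using congrArg (fun l => l.head?) h2
    subst hs
    have hp : (a ++ [D]) <+: (a ++ D :: c) := ⟨c, by simp⟩
    have := ha'.1 (a ++ [D]) hp
    have hsa := ha.2
    simp only [List.map_append, List.sum_append, MStep.val, List.map_cons, List.map_nil,
      List.sum_cons, List.sum_nil] at this
    omega

lemma split_unique {a a' b b' : List MStep} (ha : IsTwoMotzkin a) (ha' : IsTwoMotzkin a')
    (h : a ++ D :: b = a' ++ D :: b') : a = a' ∧ b = b' := by
  have hcmp : a <+: a' ∨ a' <+: a := by
    have h1 : a <+: a ++ D :: b := List.prefix_append _ _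
    have h2 : a' <+: a ++ D :: b := h ▸ List.prefix_append _ _
    exact List.prefix_or_prefix_of_prefix h1 h2
  have heq : a = a' := by
    rcases hcmp with hc | hc
    · exact split_unique_aux ha ha' hc h
    · exact (split_unique_aux ha' ha hc h.symm).symm
  subst heq
  exact ⟨rfl, by simpa using List.append_cancel_left h⟩

lemma phi_inj : ∀ t : PlaneTree, t ≠ node [] → ∀ t' : PlaneTree, t' ≠ node [] →
    phi t = phi t' → t = t' := by
  intro t
  induction t using phi.induct with
  | case1 => intro h; exact absurd rfl h
  | case2 =>
      intro _ t' ht' h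
      rcases t' with ⟨_ | ⟨⟨_ | ⟨s', ss'⟩⟩, _ | ⟨u', us'⟩⟩⟩
      · exact absurd rfl ht'
      · rfl
      all_goals (rw [phi] at h; rw [phi] at h; simp at h)
  | case3 s ss ih =>
      intro _ t' ht' h
      rcases t' with ⟨_ | ⟨⟨_ | ⟨s', ss'⟩⟩, _ | ⟨u', us'⟩⟩⟩
      · exact absurd rfl ht'
      all_goals rw [phi] at h; rw [phi] at h
      · simp at h
      · simp at h
      · simp only [List.cons.injEq, true_and] at h
        have := ih (by simp) (node (s' :: ss')) (by simp) h
        rw [this]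
      · simp at h
  | case4 u us ih =>
      intro _ t' ht' h
      rcases t' with ⟨_ | ⟨⟨_ | ⟨s', ss'⟩⟩, _ | ⟨u', us'⟩⟩⟩
      · exact absurd rfl ht'
      all_goals rw [phi] at h; rw [phi] at h
      · simp at h
      · simp only [List.cons.injEq, true_and] at h
        have := ih (by simp) (node (u' :: us')) (by simp) h
        injection this with h2
        rw [h2]
      · simp at h
      · simp at h
  | case5 s ss u us ih1 ih2 =>
      intro _ t' ht' h
      rcases t' with ⟨_ | ⟨⟨_ | ⟨s', ss'⟩⟩, _ | ⟨u', us'⟩⟩⟩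
      · exact absurd rfl ht'
      all_goals rw [phi] at h; rw [phi] at h
      · simp at h
      · simp at h
      · simp at h
      · simp only [List.cons_append, List.cons.injEq, true_and] at h
        obtain ⟨hA, hB⟩ := split_unique (phi_spec (node (s :: ss)) (by simp)).2.1
          ((phi_spec (node (s' :: ss')) (by simp)).2.1) h
        have e1 := ih1 (by simp) (node (s' :: ss')) (by simp) hA
        have e2 := ih2 (by simp) (node (u' :: us')) (by simp) hB
        injection e2 with e2'
        rw [e1, e2']

lemma phi_surj : ∀ (N : ℕ) (p : List MStep), p.length ≤ N → IsTwoMotzkin p →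
    ∃ c cs, phi (node (c :: cs)) = p := by
  intro N
  induction N with
  | zero =>
      intro p hlen _
      rw [List.length_eq_zero_iff.mp (Nat.le_zero.mp hlen)]
      exact ⟨node [], [], by rw [phi]⟩
  | succ N ih =>
      intro p hlen hp
      rcases p with _ | ⟨s, p⟩
      · exact ⟨node [], [], by rw [phi]⟩
      · have hlen' : p.length ≤ N := by simpa using hlen
        cases s with
        | D =>
            have := hp.1 [D] ⟨p, rfl⟩
            simp [MStep.val] at this
        | Ls =>
            obtain ⟨c, cs, hc⟩ := ih p hlen' ((isTwoMotzkin_cons_level (by rfl) p).mp hp)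
            exact ⟨node (c :: cs), [], by rw [phi, hc]⟩
        | Lw =>
            obtain ⟨c, cs, hc⟩ := ih p hlen' ((isTwoMotzkin_cons_level (by rfl) p).mp hp)
            exact ⟨node [], c :: cs, by rw [phi, hc]⟩
        | U =>
            obtain ⟨a, b, rfl, ha, hb⟩ := motzkin_U_split hp
            have hla : a.length ≤ N := by
              simp only [List.length_append, List.length_cons] at hlen'
              omega
            have hlb : b.length ≤ N := by
              simp only [List.length_append, List.length_cons] at hlen'
              omega
            obtain ⟨c1, cs1, hc1⟩ := ih a hla ha
            obtain ⟨c2, cs2, hc2⟩ := ih b hlb hb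
            exact ⟨node (c1 :: cs1), c2 :: cs2, by rw [phi, hc1, hc2]; simp⟩

/-- For all integers `n ≥ 1` and `k ≥ 1`, the number of plane trees with `n` edges and
exactly `k` leaves equals the number of 2-Motzkin paths of length `n - 1` in which the
number of up steps plus the number of wavy level steps equals `k - 1`. -/
theorem card_plane_trees_eq_card_two_motzkin (n k : ℕ) (hn : 1 ≤ n) (hk : 1 ≤ k) :
    {t : PlaneTree | t.numEdges = n ∧ t.numLeaves = k}.ncard =
      {p : List MStep | p.length = n - 1 ∧ IsTwoMotzkin p ∧
        p.count MStep.U + p.count MStep.Lw = k - 1}.ncard := by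
  set S : Set PlaneTree := {t : PlaneTree | t.numEdges = n ∧ t.numLeaves = k} with hS
  set T : Set (List MStep) := {p : List MStep | p.length = n - 1 ∧ IsTwoMotzkin p ∧
        p.count MStep.U + p.count MStep.Lw = k - 1} with hT
  have hne : ∀ t ∈ S, t ≠ node [] := by
    rintro t ⟨h1, _⟩ rfl
    rw [numEdges_nil] at h1
    omega
  have himg : phi '' S = T := by
    ext p
    constructor
    · rintro ⟨t, ⟨h1, h2⟩, rfl⟩
      obtain ⟨e1, e2, e3⟩ := phi_spec t (hne t ⟨h1, h2⟩)
      exact ⟨by omega, e2, by omega⟩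
    · rintro ⟨h1, h2, h3⟩
      obtain ⟨c, cs, rfl⟩ := phi_surj p.length p le_rfl h2
      obtain ⟨e1, e2, e3⟩ := phi_spec (node (c :: cs)) (by simp)
      exact ⟨node (c :: cs), ⟨by omega, by omega⟩, rfl⟩
  have hinj : Set.InjOn phi S := fun t ht t' ht' h =>
    phi_inj t (hne t ht) t' (hne t' ht') h
  rw [← himg, Set.ncard_image_of_injOn hinj]
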